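/- Every Γ-graded left R-module M over a Γ-graded ring R (Γ a cancellation monoid) admits a gr-injective envelope, and any two gr-injective envelopes of M are isomorphic as Γ-graded left R-modules. -/

import Mathlib

/-!
Existence. Since `Γ` is cancellative, `1` is homogeneous of degree `0`, so `R` is a graded ring.
Embed `M` in an injective `R`-module `Q`. The module `Γ →₀ Q`, where `a ∈ R_d` moves the entry
`q` in degree `γ` to `a • q` in degree `d + γ`, is gr-injective: homogeneous maps into it are the
same as `R`-linear maps into `Q` (compose with the sum of the entries). `M` embeds into it by
`x ↦ (e x_γ)_γ`. In a gr-injective module, take by Zorn a maximal graded-essential extension `E` of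
the image of `M`, and a maximal graded `C` with `C ∩ E = 0`. Extending the projection
`E ⊕ C → E` gives a homogeneous `H`; its range is still essential over `M`, hence equals `E`, so
`E` is a homogeneous retract of a gr-injective module and thus gr-injective.

Uniqueness. Extending `M → E₂` along `M → E₁` gives `h : E₁ → E₂`, injective because its kernel
misses `M`. Gr-injectivity of `E₁` gives `π` with `π ∘ h = id`, and `π` is injective because its
kernel misses `M`; hence `h` is a graded isomorphism.
-/

namespace GradedPaper

open DirectSum

section Defs

variable {Γ : Type} [DecidableEq Γ] [AddCancelMonoid Γ]

section RingDefs

variable {R : Type} [Ring R]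

/-- The grading of a module is compatible with the grading of the ring. -/
def SMulClosed (𝒜 : Γ → AddSubgroup R) {M : Type} [AddCommGroup M] [Module R M]
    (ℳ : Γ → AddSubgroup M) : Prop :=
  ∀ ⦃i j : Γ⦄ ⦃a : R⦄ ⦃m : M⦄, a ∈ 𝒜 i → m ∈ ℳ j → a • m ∈ ℳ (i + j)

/-- The multiplicative condition `R_α R_β ⊆ R_{αβ}` of a graded ring. -/
def MulClosed (𝒜 : Γ → AddSubgroup R) : Prop :=
  ∀ ⦃i j : Γ⦄ ⦃a b : R⦄, a ∈ 𝒜 i → b ∈ 𝒜 j → a * b ∈ 𝒜 (i + j)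

/-- A homogeneous (degree-preserving) homomorphism of graded modules. -/
def IsHomogeneousHom {M N : Type} [AddCommGroup M] [Module R M]
    [AddCommGroup N] [Module R N]
    (ℳ : Γ → AddSubgroup M) (𝒩 : Γ → AddSubgroup N) (f : M →ₗ[R] N) : Prop :=
  ∀ i : Γ, ∀ x ∈ ℳ i, f x ∈ 𝒩 i

/-- A homogeneous homomorphism of degree `d`. -/
def IsHomogeneousOfDeg {M N : Type} [AddCommGroup M] [Module R M]
    [AddCommGroup N] [Module R N]
    (ℳ : Γ → AddSubgroup M) (𝒩 : Γ → AddSubgroup N) (d : Γ) (f : M →ₗ[R] N) : Prop :=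
  ∀ i : Γ, ∀ x ∈ ℳ i, f x ∈ 𝒩 (i + d)

/-- A submodule is graded if it contains the homogeneous components of its elements. -/
def IsGradedSubmodule {M : Type} [AddCommGroup M] [Module R M]
    (ℳ : Γ → AddSubgroup M) [DirectSum.Decomposition ℳ] (N : Submodule R M) : Prop :=
  ∀ x ∈ N, ∀ i : Γ, (DirectSum.decompose ℳ x i : M) ∈ N

/-- The induced grading on a submodule. -/
def subGrading {M : Type} [AddCommGroup M] [Module R M]
    (ℳ : Γ → AddSubgroup M) (N : Submodule R M) : Γ → AddSubgroup ↥N :=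
  fun i => AddSubgroup.comap (N.subtype.toAddMonoidHom) (ℳ i)

/-- The induced grading on a quotient module. -/
def quotGrading {M : Type} [AddCommGroup M] [Module R M]
    (ℳ : Γ → AddSubgroup M) (N : Submodule R M) : Γ → AddSubgroup (M ⧸ N) :=
  fun i => AddSubgroup.map (N.mkQ).toAddMonoidHom (ℳ i)

/-- A graded module is gr-free if it has a basis of homogeneous elements. -/
def IsGrFree {F : Type} [AddCommGroup F] [Module R F] (ℱ : Γ → AddSubgroup F) : Prop :=
  ∃ (ι : Type) (b : Module.Basis ι R F), ∀ j : ι, ∃ i : Γ, b j ∈ ℱ i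

/-- Finitely generated gr-free. -/
def IsGrFreeFin {F : Type} [AddCommGroup F] [Module R F] (ℱ : Γ → AddSubgroup F) : Prop :=
  ∃ (n : ℕ) (b : Module.Basis (Fin n) R F), ∀ j : Fin n, ∃ i : Γ, b j ∈ ℱ i

/-- Gr-projective: homogeneous lifting property against homogeneous epimorphisms. -/
def IsGrProjective (𝒜 : Γ → AddSubgroup R) {P : Type} [AddCommGroup P] [Module R P]
    (𝒬 : Γ → AddSubgroup P) : Prop :=
  ∀ (M N : Type) [AddCommGroup M] [Module R M] [AddCommGroup N] [Module R N]
    (ℳ : Γ → AddSubgroup M) (𝒩 : Γ → AddSubgroup N)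
    [DirectSum.Decomposition ℳ] [DirectSum.Decomposition 𝒩],
    SMulClosed 𝒜 ℳ → SMulClosed 𝒜 𝒩 →
    ∀ (g : M →ₗ[R] N), IsHomogeneousHom ℳ 𝒩 g → Function.Surjective g →
    ∀ (f : P →ₗ[R] N), IsHomogeneousHom 𝒬 𝒩 f →
    ∃ h : P →ₗ[R] M, IsHomogeneousHom 𝒬 ℳ h ∧ g ∘ₗ h = f

/-- Gr-injective: homogeneous extension property against homogeneous monomorphisms. -/
def IsGrInjective (𝒜 : Γ → AddSubgroup R) {E : Type} [AddCommGroup E] [Module R E]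
    (ℰ : Γ → AddSubgroup E) : Prop :=
  ∀ (M N : Type) [AddCommGroup M] [Module R M] [AddCommGroup N] [Module R N]
    (ℳ : Γ → AddSubgroup M) (𝒩 : Γ → AddSubgroup N)
    [DirectSum.Decomposition ℳ] [DirectSum.Decomposition 𝒩],
    SMulClosed 𝒜 ℳ → SMulClosed 𝒜 𝒩 →
    ∀ (g : M →ₗ[R] N), IsHomogeneousHom ℳ 𝒩 g → Function.Injective g →
    ∀ (f : M →ₗ[R] E), IsHomogeneousHom ℳ ℰ f →
    ∃ h : N →ₗ[R] E, IsHomogeneousHom 𝒩 ℰ h ∧ h ∘ₗ g = f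

/-- A right nonzero divisor. -/
def IsRightNonZeroDivisor (r : R) : Prop := r ≠ 0 ∧ ∀ b : R, b * r = 0 → b = 0

/-- Gr-divisible graded module. -/
def IsGrDivisible (𝒜 : Γ → AddSubgroup R) {M : Type} [AddCommGroup M] [Module R M]
    (ℳ : Γ → AddSubgroup M) : Prop :=
  ∀ (i j k : Γ), i + k = j → ∀ r ∈ 𝒜 i, IsRightNonZeroDivisor r →
    ∀ y ∈ ℳ j, ∃ x ∈ ℳ k, r • x = y

/-- Graded isomorphism of graded modules. -/
def GrIso {M N : Type} [AddCommGroup M] [Module R M] [AddCommGroup N] [Module R N]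
    (ℳ : Γ → AddSubgroup M) (𝒩 : Γ → AddSubgroup N) : Prop :=
  ∃ e : M ≃ₗ[R] N, IsHomogeneousHom ℳ 𝒩 e.toLinearMap ∧
    IsHomogeneousHom 𝒩 ℳ e.symm.toLinearMap

/-- Graded left hereditary ring: every homogeneous left ideal is gr-projective. -/
def GrLeftHereditary (𝒜 : Γ → AddSubgroup R) [DirectSum.Decomposition 𝒜] : Prop :=
  ∀ I : Submodule R R, IsGradedSubmodule 𝒜 I → IsGrProjective 𝒜 (subGrading 𝒜 I)

/-- Graded left semihereditary ring: every finitely generated homogeneous left ideal is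
gr-projective. -/
def GrLeftSemihereditary (𝒜 : Γ → AddSubgroup R) [DirectSum.Decomposition 𝒜] : Prop :=
  ∀ I : Submodule R R, IsGradedSubmodule 𝒜 I → I.FG → IsGrProjective 𝒜 (subGrading 𝒜 I)

/-- The natural grading on a direct limit of graded modules. -/
noncomputable def limGrading {ι : Type} [Preorder ι] [DecidableEq ι] (F : ι → Type)
    [∀ i, AddCommGroup (F i)] [∀ i, Module R (F i)]
    (ℱ : ∀ i, Γ → AddSubgroup (F i))
    (t : ∀ i j, i ≤ j → F i →ₗ[R] F j) : Γ → AddSubgroup (Module.DirectLimit F t) :=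
  fun γ => ⨆ i, (ℱ i γ).map (Module.DirectLimit.of R ι F t i).toAddMonoidHom

end RingDefs

section CommDefs

variable {R : Type} [CommRing R]

/-- Gr-flat: tensoring preserves homogeneous monomorphisms of graded modules. -/
def IsGrFlat (𝒜 : Γ → AddSubgroup R) {F : Type} [AddCommGroup F] [Module R F]
    (ℱ : Γ → AddSubgroup F) : Prop :=
  ∀ (M N : Type) [AddCommGroup M] [Module R M] [AddCommGroup N] [Module R N]
    (ℳ : Γ → AddSubgroup M) (𝒩 : Γ → AddSubgroup N)
    [DirectSum.Decomposition ℳ] [DirectSum.Decomposition 𝒩],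
    SMulClosed 𝒜 ℳ → SMulClosed 𝒜 𝒩 →
    ∀ (f : M →ₗ[R] N), IsHomogeneousHom ℳ 𝒩 f → Function.Injective f →
      Function.Injective (LinearMap.rTensor F f)

end CommDefs

end Defs

section GradedSubmodule

variable {Γ : Type} [DecidableEq Γ] {R : Type} [Ring R]
variable {X Y : Type} [AddCommGroup X] [Module R X] [AddCommGroup Y] [Module R Y]
variable {𝒳 : Γ → AddSubgroup X} {𝒴 : Γ → AddSubgroup Y} [Decomposition 𝒳] [Decomposition 𝒴]

variable (𝒳) in
theorem linearMap_ext_of_homogeneous {f g : X →ₗ[R] Y} (h : ∀ i, ∀ x ∈ 𝒳 i, f x = g x) :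
    f = g := by
  ext x
  induction x using DirectSum.Decomposition.inductionOn 𝒳 with
  | zero => simp
  | homogeneous m => exact h _ m m.2
  | add x y hx hy => rw [map_add, map_add, hx, hy]

theorem map_smul_of_homogeneous {𝒜 : Γ → AddSubgroup R} [Decomposition 𝒜] (f : X →+ Y)
    (h : ∀ {d γ : Γ} {a : R} {x : X}, a ∈ 𝒜 d → x ∈ 𝒳 γ → f (a • x) = a • f x) (r : R) (x : X) :
    f (r • x) = r • f x := by
  induction r using DirectSum.Decomposition.inductionOn 𝒜 with
  | zero => simp
  | homogeneous a =>
    induction x using DirectSum.Decomposition.inductionOn 𝒳 with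
    | zero => simp
    | homogeneous m => exact h a.2 m.2
    | add x y hx hy => simp only [smul_add, map_add, hx, hy]
  | add r s hr hs => simp only [add_smul, map_add, hr, hs]

theorem IsHomogeneousHom.map_decompose {f : X →ₗ[R] Y} (hf : IsHomogeneousHom 𝒳 𝒴 f) (x : X)
    (i : Γ) : f (decompose 𝒳 x i) = decompose 𝒴 (f x) i := by
  induction x using DirectSum.Decomposition.inductionOn 𝒳 with
  | zero => simp
  | @homogeneous j m =>
    by_cases h : j = i
    · subst h
      rw [decompose_of_mem_same 𝒳 m.2, decompose_of_mem_same 𝒴 (hf j m m.2)]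
    · rw [decompose_of_mem_ne 𝒳 m.2 h, decompose_of_mem_ne 𝒴 (hf j m m.2) h, map_zero]
  | add x y hx hy =>
    simp only [map_add, decompose_add, DirectSum.add_apply, AddSubgroup.coe_add, hx, hy]

theorem isGradedSubmodule_bot : IsGradedSubmodule 𝒳 (⊥ : Submodule R X) := by
  rintro x rfl i
  simp

theorem IsGradedSubmodule.inf {U V : Submodule R X} (hU : IsGradedSubmodule 𝒳 U)
    (hV : IsGradedSubmodule 𝒳 V) : IsGradedSubmodule 𝒳 (U ⊓ V) :=
  fun x hx i => ⟨hU x hx.1 i, hV x hx.2 i⟩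

theorem IsGradedSubmodule.sup {U V : Submodule R X} (hU : IsGradedSubmodule 𝒳 U)
    (hV : IsGradedSubmodule 𝒳 V) : IsGradedSubmodule 𝒳 (U ⊔ V) := by
  intro x hx i
  obtain ⟨u, hu, v, hv, rfl⟩ := Submodule.mem_sup.mp hx
  rw [decompose_add, DirectSum.add_apply, AddSubgroup.coe_add]
  exact add_mem (Submodule.mem_sup_left (hU u hu i)) (Submodule.mem_sup_right (hV v hv i))

theorem isGradedSubmodule_sSup_of_directedOn {S : Set (Submodule R X)}
    (hS : ∀ U ∈ S, IsGradedSubmodule 𝒳 U) (hne : S.Nonempty) (hdir : DirectedOn (· ≤ ·) S) :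
    IsGradedSubmodule 𝒳 (sSup S) := by
  intro x hx i
  obtain ⟨U, hUS, hxU⟩ := (Submodule.mem_sSup_of_directed hne hdir).mp hx
  exact le_sSup hUS (hS U hUS x hxU i)

theorem IsGradedSubmodule.comap {f : X →ₗ[R] Y} (hf : IsHomogeneousHom 𝒳 𝒴 f)
    {V : Submodule R Y} (hV : IsGradedSubmodule 𝒴 V) : IsGradedSubmodule 𝒳 (V.comap f) := by
  intro x hx i
  rw [Submodule.mem_comap, hf.map_decompose]
  exact hV _ hx i

theorem IsGradedSubmodule.map {f : X →ₗ[R] Y} (hf : IsHomogeneousHom 𝒳 𝒴 f)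
    {U : Submodule R X} (hU : IsGradedSubmodule 𝒳 U) : IsGradedSubmodule 𝒴 (U.map f) := by
  rintro _ ⟨x, hx, rfl⟩ i
  exact ⟨_, hU x hx i, hf.map_decompose x i⟩

theorem isGradedSubmodule_ker {f : X →ₗ[R] Y} (hf : IsHomogeneousHom 𝒳 𝒴 f) :
    IsGradedSubmodule 𝒳 (LinearMap.ker f) :=
  isGradedSubmodule_bot.comap hf

theorem isGradedSubmodule_range {f : X →ₗ[R] Y} (hf : IsHomogeneousHom 𝒳 𝒴 f) :
    IsGradedSubmodule 𝒴 (LinearMap.range f) := by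
  rintro _ ⟨x, rfl⟩ i
  exact ⟨_, hf.map_decompose x i⟩

theorem IsHomogeneousHom.injective_of_injective_comp {M : Type} [AddCommGroup M] [Module R M]
    {e : M →ₗ[R] X}
    (he : ∀ U : Submodule R X, IsGradedSubmodule 𝒳 U → U ≠ ⊥ → U ⊓ LinearMap.range e ≠ ⊥)
    {f : X →ₗ[R] Y} (hf : IsHomogeneousHom 𝒳 𝒴 f) (hfe : Function.Injective (f ∘ₗ e)) :
    Function.Injective f := by
  rw [← LinearMap.ker_eq_bot]
  by_contra hne
  refine he _ (isGradedSubmodule_ker hf) hne (eq_bot_iff.mpr ?_)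
  rintro _ ⟨hx, m, rfl⟩
  rw [Submodule.mem_bot, hfe (by simpa using hx : f (e m) = f (e 0)), map_zero]

theorem IsGradedSubmodule.mem_of_add_mem {U V : Submodule R X} (hU : IsGradedSubmodule 𝒳 U)
    (hV : IsGradedSubmodule 𝒳 V) (hUV : Disjoint U V) {u v : X} (hu : u ∈ U) (hv : v ∈ V)
    {i : Γ} (h : u + v ∈ 𝒳 i) : u ∈ 𝒳 i := by
  have hsum : (decompose 𝒳 u i : X) + decompose 𝒳 v i = u + v := by
    rw [← AddSubgroup.coe_add, ← DirectSum.add_apply, ← decompose_add,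
      decompose_of_mem_same 𝒳 h]
  have hdiff : (decompose 𝒳 u i : X) - u ∈ U ⊓ V := by
    refine ⟨sub_mem (hU u hu i) hu, ?_⟩
    rw [show (decompose 𝒳 u i : X) - u = v - decompose 𝒳 v i by
      rw [sub_eq_sub_iff_add_eq_add, hsum, add_comm]]
    exact sub_mem hv (hV v hv i)
  rw [hUV.eq_bot, Submodule.mem_bot, sub_eq_zero] at hdiff
  exact hdiff ▸ (decompose 𝒳 u i).2

end GradedSubmodule

section SubGrading

variable {Γ : Type} {R : Type} [Ring R] {X : Type} [AddCommGroup X] [Module R X]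
variable {𝒳 : Γ → AddSubgroup X}

theorem isHomogeneousHom_subtype (N : Submodule R X) :
    IsHomogeneousHom (subGrading 𝒳 N) 𝒳 N.subtype :=
  fun _ _ hx => hx

theorem SMulClosed.subGrading [AddCancelMonoid Γ] {𝒜 : Γ → AddSubgroup R}
    (hsm : SMulClosed 𝒜 𝒳) (N : Submodule R X) : SMulClosed 𝒜 (subGrading 𝒳 N) :=
  fun _ _ _ _ ha hm => hsm ha hm

noncomputable def subGradingIncl (N : Submodule R X) : (⨁ i, subGrading 𝒳 N i) →+ ⨁ i, 𝒳 i :=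
  DFinsupp.mapRange.addMonoidHom fun i =>
    (N.subtype.toAddMonoidHom.comp (subGrading 𝒳 N i).subtype).codRestrict (𝒳 i) fun y => y.2

theorem subGradingIncl_injective (N : Submodule R X) :
    Function.Injective (subGradingIncl (𝒳 := 𝒳) N) :=
  (DFinsupp.mapRange_injective _ fun _ => map_zero _).mpr
    fun _ _ _ h => Subtype.ext (Subtype.ext congr($h.1))

theorem coeAddMonoidHom_subGradingIncl [DecidableEq Γ] (N : Submodule R X)
    (z : ⨁ i, subGrading 𝒳 N i) :
    DirectSum.coeAddMonoidHom 𝒳 (subGradingIncl N z)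
      = (DirectSum.coeAddMonoidHom (subGrading 𝒳 N) z : X) := by
  induction z using DirectSum.induction_on with
  | zero => simp
  | of i y =>
    rw [subGradingIncl, DFinsupp.mapRange.addMonoidHom_apply]
    erw [DFinsupp.mapRange_single]
    rw [DirectSum.coeAddMonoidHom_of]
    exact DirectSum.coeAddMonoidHom_of 𝒳 i _
  | add z w hz hw => simp [hz, hw]

theorem IsGradedSubmodule.isInternal [DecidableEq Γ] [Decomposition 𝒳] {N : Submodule R X}
    (hN : IsGradedSubmodule 𝒳 N) : DirectSum.IsInternal (subGrading 𝒳 N) := by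
  classical
  refine ⟨fun z w h => subGradingIncl_injective N ((Decomposition.isInternal 𝒳).injective ?_),
    fun x => ?_⟩
  · rw [coeAddMonoidHom_subGradingIncl, coeAddMonoidHom_subGradingIncl, h]
  · refine ⟨∑ i ∈ (decompose 𝒳 (x : X)).support,
      of (fun i => subGrading 𝒳 N i) i ⟨⟨_, hN _ x.2 i⟩, (decompose 𝒳 (x : X) i).2⟩,
      Subtype.ext ?_⟩
    simp [sum_support_decompose]

theorem IsGrInjective.of_retract [DecidableEq Γ] [AddCancelMonoid Γ] {𝒜 : Γ → AddSubgroup R}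
    (hinj : IsGrInjective 𝒜 𝒳) {N : Submodule R X} [Decomposition (subGrading 𝒳 N)]
    {H : X →ₗ[R] X} (hH : IsHomogeneousHom 𝒳 𝒳 H) (hHN : ∀ x, H x ∈ N)
    (hHid : ∀ x ∈ N, H x = x) : IsGrInjective 𝒜 (subGrading 𝒳 N) := by
  intro A B _ _ _ _ 𝒜' ℬ _ _ hsmA hsmB g hg hg_inj f hf
  obtain ⟨h, hh, hhg⟩ :=
    hinj A B 𝒜' ℬ hsmA hsmB g hg hg_inj (N.subtype ∘ₗ f) fun i x hx => hf i x hx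
  refine ⟨H.codRestrict N hHN ∘ₗ h, fun i x hx => hH i _ (hh i x hx), LinearMap.ext fun a => ?_⟩
  have hga : h (g a) = f a := congr($hhg a)
  exact Subtype.ext ((congrArg H hga).trans (hHid _ (f a).2))

end SubGrading

section EssentialExtension

variable {Γ : Type} [DecidableEq Γ] {R : Type} [Ring R]
variable {X : Type} [AddCommGroup X] [Module R X] {𝒳 : Γ → AddSubgroup X}

def IsGrEssentialExt (𝒳 : Γ → AddSubgroup X) [Decomposition 𝒳] (W E : Submodule R X) : Prop :=
  ∀ U : Submodule R X, IsGradedSubmodule 𝒳 U → U ≤ E → U ≠ ⊥ → U ⊓ W ≠ ⊥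

variable [Decomposition 𝒳]

theorem exists_maximal_isGrEssentialExt {W : Submodule R X} (hW : IsGradedSubmodule 𝒳 W) :
    ∃ E, Maximal (fun E => IsGradedSubmodule 𝒳 E ∧ W ≤ E ∧ IsGrEssentialExt 𝒳 W E) E := by
  have hchains : ∀ c ⊆ {E | IsGradedSubmodule 𝒳 E ∧ W ≤ E ∧ IsGrEssentialExt 𝒳 W E},
      IsChain (· ≤ ·) c → ∀ E ∈ c, ∃ ub ∈ {E | IsGradedSubmodule 𝒳 E ∧ W ≤ E ∧
        IsGrEssentialExt 𝒳 W E}, ∀ V ∈ c, V ≤ ub := by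
    intro c hc hchain E hE
    have hdir := hchain.directedOn
    refine ⟨sSup c, ⟨isGradedSubmodule_sSup_of_directedOn (fun U hU => (hc hU).1) ⟨E, hE⟩ hdir,
      (hc hE).2.1.trans (le_sSup hE), fun U hU hUc hU0 => ?_⟩, fun _ => le_sSup⟩
    obtain ⟨u, huU, hu0⟩ := Submodule.exists_mem_ne_zero_of_ne_bot hU0
    obtain ⟨V, hVc, huV⟩ := (Submodule.mem_sSup_of_directed ⟨E, hE⟩ hdir).mp (hUc huU)
    have hUV := (hc hVc).2.2 (U ⊓ V) (hU.inf (hc hVc).1) inf_le_right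
      ((Submodule.ne_bot_iff _).mpr ⟨u, ⟨huU, huV⟩, hu0⟩)
    exact fun h => hUV (eq_bot_mono (inf_le_inf_right W inf_le_left) h)
  obtain ⟨E, -, hE⟩ := zorn_le_nonempty₀ _ hchains W
    ⟨hW, le_rfl, fun U _ hUW hU => by rwa [inf_eq_left.mpr hUW]⟩
  exact ⟨E, hE⟩

theorem exists_maximal_disjoint (E : Submodule R X) :
    ∃ C, Maximal (fun C => IsGradedSubmodule 𝒳 C ∧ Disjoint C E) C := by
  have hchains : ∀ c ⊆ {C | IsGradedSubmodule 𝒳 C ∧ Disjoint C E}, IsChain (· ≤ ·) c →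
      ∀ C ∈ c, ∃ ub ∈ {C | IsGradedSubmodule 𝒳 C ∧ Disjoint C E}, ∀ V ∈ c, V ≤ ub :=
    fun c hc hchain C hC => ⟨sSup c, ⟨isGradedSubmodule_sSup_of_directedOn
      (fun U hU => (hc hU).1) ⟨C, hC⟩ hchain.directedOn,
      hchain.directedOn.disjoint_sSup_left.mpr fun U hU => (hc hU).2⟩, fun _ => le_sSup⟩
  obtain ⟨C, -, hC⟩ := zorn_le_nonempty₀ _ hchains ⊥ ⟨isGradedSubmodule_bot, disjoint_bot_left⟩
  exact ⟨C, hC⟩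

theorem isGrEssentialExt_range {W E C : Submodule R X} {H : X →ₗ[R] X}
    (hH : IsHomogeneousHom 𝒳 𝒳 H) (hE : IsGradedSubmodule 𝒳 E) (hWE : IsGrEssentialExt 𝒳 W E)
    (hC : Maximal (fun C => IsGradedSubmodule 𝒳 C ∧ Disjoint C E) C)
    (hHE : ∀ x ∈ E, H x = x) (hHC : ∀ x ∈ C, H x = 0) :
    IsGrEssentialExt 𝒳 W (LinearMap.range H) := by
  intro U hU hUH hU0
  -- If `U ∩ E = 0`, then `H⁻¹ U` is a graded complement of `E` containing `C`, so it is `C`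
  -- and `U = H (H⁻¹ U) = 0`.
  have hUE : U ⊓ E ≠ ⊥ := by
    intro hUE
    have hdisj : Disjoint (U.comap H) E := Submodule.disjoint_def.mpr fun x hxU hxE => by
      have hx : x ∈ U ⊓ E := ⟨by rwa [Submodule.mem_comap, hHE x hxE] at hxU, hxE⟩
      rwa [hUE, Submodule.mem_bot] at hx
    have hUC : U.comap H ≤ C := hC.2 ⟨hU.comap hH, hdisj⟩ fun x hx => by simp [hHC x hx]
    refine hU0 (eq_bot_iff.mpr fun u hu => ?_)
    obtain ⟨x, rfl⟩ := hUH hu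
    simp [hHC x (hUC hu)]
  exact fun h => hWE _ (hU.inf hE) inf_le_right hUE (eq_bot_mono (inf_le_inf_right W inf_le_left) h)

theorem IsGrEssentialExt.subtype {W E : Submodule R X} (hess : IsGrEssentialExt 𝒳 W E)
    [Decomposition (subGrading 𝒳 E)] {U : Submodule R E}
    (hU : IsGradedSubmodule (subGrading 𝒳 E) U) (hU0 : U ≠ ⊥) : U ⊓ W.comap E.subtype ≠ ⊥ := by
  refine fun h => hess (U.map E.subtype) (hU.map (isHomogeneousHom_subtype E))
    (Submodule.map_subtype_le E U) (fun h' => hU0 ?_) (eq_bot_iff.mpr ?_)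
  · exact Submodule.map_injective_of_injective E.injective_subtype
      (h'.trans (Submodule.map_bot _).symm)
  · rintro _ ⟨⟨u, huU, rfl⟩, huW⟩
    have hu : u ∈ U ⊓ W.comap E.subtype := ⟨huU, huW⟩
    rw [h, Submodule.mem_bot] at hu
    simp [hu]

variable [AddCancelMonoid Γ]

theorem IsGrInjective.exists_projection {𝒜 : Γ → AddSubgroup R} (hinj : IsGrInjective 𝒜 𝒳)
    (hsm : SMulClosed 𝒜 𝒳) {E C : Submodule R X} (hE : IsGradedSubmodule 𝒳 E)
    (hC : IsGradedSubmodule 𝒳 C) (hEC : Disjoint E C) :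
    ∃ H : X →ₗ[R] X, IsHomogeneousHom 𝒳 𝒳 H ∧ (∀ x ∈ E, H x = x) ∧ ∀ x ∈ C, H x = 0 := by
  let := (hE.sup hC).isInternal.chooseDecomposition
  let f : X →ₗ.[R] X := ⟨E, E.subtype⟩
  let g : X →ₗ.[R] X := ⟨C, 0⟩
  let p : ↥(E ⊔ C) →ₗ[R] X := (f.sup g (LinearPMap.sup_h_of_disjoint _ _ hEC)).toFun
  have hp (e : E) (c : C) (z : ↥(E ⊔ C)) (h : (e : X) + c = z) : p z = e :=
    (LinearPMap.sup_apply (f := f) (g := g) _ e c z h).trans (add_zero _)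
  have hp_hom : IsHomogeneousHom (subGrading 𝒳 (E ⊔ C)) 𝒳 p := by
    intro i z hz
    obtain ⟨e, he, c, hc, hec⟩ := Submodule.mem_sup.mp z.2
    rw [hp ⟨e, he⟩ ⟨c, hc⟩ z hec]
    exact hE.mem_of_add_mem hC hEC he hc (hec ▸ hz)
  obtain ⟨H, hH, hHp⟩ := hinj _ X _ 𝒳 (hsm.subGrading _) hsm (E ⊔ C).subtype
    (isHomogeneousHom_subtype _) Subtype.val_injective p hp_hom
  refine ⟨H, hH, fun x hx => ?_, fun x hx => ?_⟩
  · exact congr($hHp ⟨x, le_sup_left (a := E) hx⟩).trans (hp ⟨x, hx⟩ 0 _ (add_zero x))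
  · exact congr($hHp ⟨x, le_sup_right (b := C) hx⟩).trans
      (by simpa using hp 0 ⟨x, hx⟩ _ (zero_add x))

theorem IsGrInjective.exists_isGrEssentialExt_retract {𝒜 : Γ → AddSubgroup R}
    (hinj : IsGrInjective 𝒜 𝒳) (hsm : SMulClosed 𝒜 𝒳) {W : Submodule R X}
    (hW : IsGradedSubmodule 𝒳 W) :
    ∃ E, IsGradedSubmodule 𝒳 E ∧ W ≤ E ∧ IsGrEssentialExt 𝒳 W E ∧
      ∃ H : X →ₗ[R] X, IsHomogeneousHom 𝒳 𝒳 H ∧ (∀ x, H x ∈ E) ∧ ∀ x ∈ E, H x = x := by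
  obtain ⟨E, hEmax⟩ := exists_maximal_isGrEssentialExt hW
  obtain ⟨hE, hWE, hess⟩ := hEmax.prop
  obtain ⟨C, hCmax⟩ := exists_maximal_disjoint (𝒳 := 𝒳) E
  obtain ⟨H, hH, hHE, hHC⟩ := hinj.exists_projection hsm hE hCmax.prop.1 hCmax.prop.2.symm
  have hEH : E ≤ LinearMap.range H := fun x hx => ⟨x, hHE x hx⟩
  have hrange : LinearMap.range H = E := le_antisymm
    (hEmax.2 ⟨isGradedSubmodule_range hH, hWE.trans hEH,
      isGrEssentialExt_range hH hE hess hCmax hHE hHC⟩ hEH) hEH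
  exact ⟨E, hE, hWE, hess, H, hH, fun x => hrange ▸ LinearMap.mem_range_self H x, hHE⟩

end EssentialExtension

section Coinduced

variable {Γ : Type} {R : Type} [Ring R]

/-- `Γ →₀ Q`, to be made a graded `R`-module in which `a ∈ 𝒜 d` moves the entry `q` in degree `γ`
to `a • q` in degree `d + γ`; the parameter `𝒜` only selects that module structure. -/
def Coind (_𝒜 : Γ → AddSubgroup R) (Q : Type) [AddCommGroup Q] : Type := Γ →₀ Q

variable {𝒜 : Γ → AddSubgroup R} {Q : Type} [AddCommGroup Q]

noncomputable instance : AddCommGroup (Coind 𝒜 Q) := inferInstanceAs (AddCommGroup (Γ →₀ Q))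

namespace Coind

noncomputable def equiv : (Γ →₀ Q) ≃+ Coind 𝒜 Q := AddEquiv.refl _

noncomputable def single (γ : Γ) : Q →+ Coind 𝒜 Q :=
  equiv.toAddMonoidHom.comp (Finsupp.singleAddHom γ)

theorem addHom_ext {P : Type} [AddCommGroup P] {f g : Coind 𝒜 Q →+ P}
    (h : ∀ γ q, f (single γ q) = g (single γ q)) : f = g := by
  have : f.comp equiv.toAddMonoidHom = g.comp equiv.toAddMonoidHom := Finsupp.addHom_ext h
  ext x
  simpa using DFunLike.congr_fun this (equiv.symm x)

variable (𝒜 Q) in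
noncomputable def grading (γ : Γ) : AddSubgroup (Coind 𝒜 Q) := (single γ).range

variable [DecidableEq Γ] in
noncomputable def decomposeHom : Coind 𝒜 Q →+ ⨁ γ, grading 𝒜 Q γ :=
  (Finsupp.liftAddHom fun γ => (of _ γ).comp (single γ).rangeRestrict).comp
    equiv.symm.toAddMonoidHom

variable [DecidableEq Γ] in
theorem decomposeHom_single (γ : Γ) (q : Q) :
    decomposeHom (single γ q) = of (fun γ => grading 𝒜 Q γ) γ ⟨single γ q, q, rfl⟩ := by
  show Finsupp.liftAddHom _ (Finsupp.single γ q) = _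
  rw [Finsupp.liftAddHom_apply_single]
  rfl

noncomputable instance [DecidableEq Γ] : Decomposition (grading 𝒜 Q) :=
  .ofAddHom _ decomposeHom
    (addHom_ext fun γ q => by
      rw [AddMonoidHom.comp_apply, decomposeHom_single, DirectSum.coeAddMonoidHom_of]; rfl)
    (DirectSum.addHom_ext fun γ ⟨_, q, hq⟩ => by
      subst hq
      rw [AddMonoidHom.comp_apply, DirectSum.coeAddMonoidHom_of, decomposeHom_single]; rfl)

variable [Module R Q] [AddCancelMonoid Γ]

variable (Q) in
noncomputable def shiftSMul (d : Γ) : R →+ Module.End ℤ (Γ →₀ Q) where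
  toFun a := Finsupp.lmapDomain Q ℤ (d + ·) ∘ₗ
    Finsupp.mapRange.linearMap (DistribSMul.toLinearMap ℤ Q a)
  map_zero' := Finsupp.lhom_ext fun _ _ => by simp
  map_add' _ _ := Finsupp.lhom_ext fun _ _ => by simp [add_smul, Finsupp.mapDomain_add]

theorem shiftSMul_single (d γ : Γ) (a : R) (q : Q) :
    shiftSMul Q d a (Finsupp.single γ q) = Finsupp.single (d + γ) (a • q) := by
  simp [shiftSMul]

variable [DecidableEq Γ]

variable (𝒜 Q) in
noncomputable def act [Decomposition 𝒜] : R →+ Module.End ℤ (Γ →₀ Q) :=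
  (DirectSum.toAddMonoid fun d => (shiftSMul Q d).comp (𝒜 d).subtype).comp
    (decomposeAddEquiv 𝒜).toAddMonoidHom

theorem act_of_mem [Decomposition 𝒜] {d : Γ} {a : R} (ha : a ∈ 𝒜 d) :
    act 𝒜 Q a = shiftSMul Q d a := by
  simp [act, decompose_of_mem 𝒜 ha]

variable [GradedRing 𝒜]

theorem act_one : act 𝒜 Q 1 = 1 := by
  rw [act_of_mem SetLike.GradedOne.one_mem]
  exact Finsupp.lhom_ext fun γ q => by simp [shiftSMul_single]

theorem act_mul (r s : R) : act 𝒜 Q (r * s) = act 𝒜 Q r * act 𝒜 Q s := by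
  induction r using DirectSum.Decomposition.inductionOn 𝒜 with
  | zero => simp
  | @homogeneous d a =>
    induction s using DirectSum.Decomposition.inductionOn 𝒜 with
    | zero => simp
    | @homogeneous e b =>
      rw [act_of_mem (SetLike.GradedMul.mul_mem a.2 b.2), act_of_mem a.2, act_of_mem b.2]
      exact Finsupp.lhom_ext fun γ q => by simp [shiftSMul_single, mul_smul, add_assoc]
    | add x y hx hy => simp only [mul_add, map_add, hx, hy]
  | add x y hx hy => simp only [add_mul, map_add, hx, hy]

noncomputable instance : Module R (Coind 𝒜 Q) :=
  Module.compHom (Γ →₀ Q) ({ act 𝒜 Q with map_one' := act_one, map_mul' := act_mul } :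
    R →+* Module.End ℤ (Γ →₀ Q))

theorem smul_single {d : Γ} {a : R} (ha : a ∈ 𝒜 d) (γ : Γ) (q : Q) :
    a • (single γ q : Coind 𝒜 Q) = single (d + γ) (a • q) := by
  show act 𝒜 Q a (Finsupp.single γ q) = Finsupp.single (d + γ) (a • q)
  rw [act_of_mem ha, shiftSMul_single]

theorem smulClosed : SMulClosed 𝒜 (grading 𝒜 Q) := by
  rintro d γ a _ ha ⟨q, rfl⟩
  exact ⟨a • q, (smul_single ha γ q).symm⟩

noncomputable def aug : Coind 𝒜 Q →ₗ[R] Q where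
  __ := (Finsupp.liftAddHom fun _ => AddMonoidHom.id Q).comp equiv.symm.toAddMonoidHom
  map_smul' := map_smul_of_homogeneous (𝒜 := 𝒜) (𝒳 := grading 𝒜 Q) _ <| by
    rintro d γ a _ ha ⟨q, rfl⟩
    rw [smul_single ha]
    simp [single]

theorem aug_single (γ : Γ) (q : Q) : aug (single γ q : Coind 𝒜 Q) = q := by
  simp [aug, single]

variable {X : Type} [AddCommGroup X] [Module R X] {𝒳 : Γ → AddSubgroup X} [Decomposition 𝒳]

noncomputable def lift (hsm : SMulClosed 𝒜 𝒳) (u : X →ₗ[R] Q) : X →ₗ[R] Coind 𝒜 Q where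
  __ := (DirectSum.toAddMonoid fun γ => (single γ).comp (u.toAddMonoidHom.comp (𝒳 γ).subtype)).comp
    (decomposeAddEquiv 𝒳).toAddMonoidHom
  map_smul' := map_smul_of_homogeneous (𝒜 := 𝒜) (𝒳 := 𝒳) _ fun {d γ a x} ha hx => by
    simp [decompose_of_mem 𝒳 hx, decompose_of_mem 𝒳 (hsm ha hx), smul_single ha]

theorem lift_of_mem (hsm : SMulClosed 𝒜 𝒳) (u : X →ₗ[R] Q) {γ : Γ} {x : X} (hx : x ∈ 𝒳 γ) :
    lift hsm u x = single γ (u x) := by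
  simp [lift, decompose_of_mem 𝒳 hx]

theorem isHomogeneousHom_lift (hsm : SMulClosed 𝒜 𝒳) (u : X →ₗ[R] Q) :
    IsHomogeneousHom 𝒳 (grading 𝒜 Q) (lift hsm u) :=
  fun _ _ hx => ⟨_, (lift_of_mem hsm u hx).symm⟩

theorem aug_comp_lift (hsm : SMulClosed 𝒜 𝒳) (u : X →ₗ[R] Q) : aug ∘ₗ lift hsm u = u :=
  linearMap_ext_of_homogeneous 𝒳 fun _ x hx => by simp [lift_of_mem hsm u hx, aug_single]

theorem lift_aug_comp (hsm : SMulClosed 𝒜 𝒳) {f : X →ₗ[R] Coind 𝒜 Q}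
    (hf : IsHomogeneousHom 𝒳 (grading 𝒜 Q) f) : lift hsm (aug ∘ₗ f) = f :=
  linearMap_ext_of_homogeneous 𝒳 fun γ x hx => by
    obtain ⟨q, hq⟩ := hf γ x hx
    simp [lift_of_mem hsm _ hx, ← hq, aug_single]

theorem lift_comp {Y : Type} [AddCommGroup Y] [Module R Y] {𝒴 : Γ → AddSubgroup Y}
    [Decomposition 𝒴] (hsmX : SMulClosed 𝒜 𝒳) (hsmY : SMulClosed 𝒜 𝒴) (v : Y →ₗ[R] Q)
    {g : X →ₗ[R] Y} (hg : IsHomogeneousHom 𝒳 𝒴 g) : lift hsmY v ∘ₗ g = lift hsmX (v ∘ₗ g) :=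
  linearMap_ext_of_homogeneous 𝒳 fun γ x hx => by
    simp [lift_of_mem hsmY v (hg γ x hx), lift_of_mem hsmX _ hx]

variable (𝒜 Q) in
theorem isGrInjective [Module.Injective R Q] : IsGrInjective 𝒜 (grading 𝒜 Q) := by
  intro X Y _ _ _ _ 𝒳 𝒴 _ _ hsmX hsmY g hg hg_inj f hf
  obtain ⟨v, hv⟩ := Module.Injective.extension_property R Q X Y g hg_inj (aug ∘ₗ f)
  exact ⟨lift hsmY v, isHomogeneousHom_lift hsmY v, by
    rw [lift_comp hsmX hsmY v hg, hv, lift_aug_comp hsmX hf]⟩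

end Coind

end Coinduced

section GradedRingOfMulClosed

variable {Γ : Type} [DecidableEq Γ] [AddCancelMonoid Γ] {R : Type} [Ring R]

theorem decompose_smul_of_mem {𝒜 : Γ → AddSubgroup R} {X : Type} [AddCommGroup X] [Module R X]
    {𝒳 : Γ → AddSubgroup X} [Decomposition 𝒳] (hsm : SMulClosed 𝒜 𝒳) {d : Γ} {a : R}
    (ha : a ∈ 𝒜 d) (x : X) (γ : Γ) :
    (decompose 𝒳 (a • x) (d + γ) : X) = a • (decompose 𝒳 x γ : X) := by
  induction x using DirectSum.Decomposition.inductionOn 𝒳 with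
  | zero => simp
  | @homogeneous j m =>
    by_cases h : j = γ
    · subst h
      rw [decompose_of_mem_same 𝒳 m.2, decompose_of_mem_same 𝒳 (hsm ha m.2)]
    · rw [decompose_of_mem_ne 𝒳 m.2 h, decompose_of_mem_ne 𝒳 (hsm ha m.2) (h ∘ add_left_cancel),
        smul_zero]
  | add x y hx hy =>
    simp only [smul_add, decompose_add, DirectSum.add_apply, AddSubgroup.coe_add, hx, hy]

theorem one_mem_zero_of_mulClosed {𝒜 : Γ → AddSubgroup R} [Decomposition 𝒜]
    (hmul : MulClosed 𝒜) : (1 : R) ∈ 𝒜 0 := by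
  -- Comparing degree-`d` components of `a * 1 = a` shows that `1₀` is a right unit.
  have hright (r : R) : r * decompose 𝒜 1 0 = r := by
    induction r using DirectSum.Decomposition.inductionOn 𝒜 with
    | zero => simp
    | @homogeneous d a =>
      have := decompose_smul_of_mem (𝒳 := 𝒜) hmul a.2 1 0
      rw [smul_eq_mul, mul_one, add_zero, decompose_of_mem_same 𝒜 a.2] at this
      exact this.symm
    | add x y hx hy => rw [add_mul, hx, hy]
  exact (one_mul _).symm.trans (hright 1) ▸ (decompose 𝒜 1 0).2

abbrev GradedRing.ofMulClosed (𝒜 : Γ → AddSubgroup R) [Decomposition 𝒜] (hmul : MulClosed 𝒜) :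
    GradedRing 𝒜 :=
  { ‹Decomposition 𝒜› with
    one_mem := one_mem_zero_of_mulClosed hmul
    mul_mem := fun _ _ _ _ ha hb => hmul ha hb }

end GradedRingOfMulClosed

theorem exists_embedding_into_injective (R : Type) [Ring R] (M : Type) [AddCommGroup M]
    [Module R M] : ∃ (Q : Type) (_ : AddCommGroup Q) (_ : Module R Q), Module.Injective R Q ∧
      ∃ e : M →ₗ[R] Q, Function.Injective e := by
  let J := CategoryTheory.Injective.under (ModuleCat.of R M)
  have : CategoryTheory.Injective (ModuleCat.of R J) := CategoryTheory.Injective.injective_under _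
  exact ⟨J, inferInstance, inferInstance, Module.injective_module_of_injective_object R J,
    (CategoryTheory.Injective.ι (ModuleCat.of R M)).hom,
    (ModuleCat.mono_iff_injective (CategoryTheory.Injective.ι (ModuleCat.of R M))).mp
      inferInstance⟩

section Stmt8

variable {Γ : Type} [DecidableEq Γ] [AddCancelMonoid Γ] {R : Type} [Ring R]

/-- A gr-injective envelope of the graded module `M`: a gr-injective graded-essential
extension. -/
structure GrInjEnvelope (𝒜 : Γ → AddSubgroup R) {M : Type} [AddCommGroup M]
    [Module R M] (ℳ : Γ → AddSubgroup M) where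
  carrier : Type
  [acg : AddCommGroup carrier]
  [mod : Module R carrier]
  grading : Γ → AddSubgroup carrier
  [dec : DirectSum.Decomposition grading]
  smul : SMulClosed 𝒜 grading
  emb : M →ₗ[R] carrier
  emb_inj : Function.Injective emb
  emb_hom : IsHomogeneousHom ℳ grading emb
  injective : IsGrInjective 𝒜 grading
  essential : ∀ U : Submodule R carrier, IsGradedSubmodule grading U → U ≠ ⊥ →
    U ⊓ LinearMap.range emb ≠ ⊥

attribute [instance] GrInjEnvelope.acg GrInjEnvelope.mod GrInjEnvelope.dec

theorem IsGrInjective.nonempty_grInjEnvelope {𝒜 : Γ → AddSubgroup R} {M : Type} [AddCommGroup M]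
    [Module R M] {ℳ : Γ → AddSubgroup M} [Decomposition ℳ] {X : Type} [AddCommGroup X]
    [Module R X] {𝒳 : Γ → AddSubgroup X} [Decomposition 𝒳] (hinj : IsGrInjective 𝒜 𝒳)
    (hsm : SMulClosed 𝒜 𝒳) {φ : M →ₗ[R] X} (hφ : Function.Injective φ)
    (hφh : IsHomogeneousHom ℳ 𝒳 φ) : Nonempty (GrInjEnvelope 𝒜 ℳ) := by
  obtain ⟨E, hE, hφE, hess, H, hH, hHE, hHid⟩ :=
    hinj.exists_isGrEssentialExt_retract hsm (isGradedSubmodule_range hφh)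
  let := hE.isInternal.chooseDecomposition
  exact ⟨{
    carrier := E
    grading := subGrading 𝒳 E
    smul := hsm.subGrading E
    emb := φ.codRestrict E fun m => hφE ⟨m, rfl⟩
    emb_inj := fun _ _ h => hφ congr(($h : X))
    emb_hom := hφh
    injective := hinj.of_retract hH hHE hHid
    essential := fun U hU hU0 => by
      rw [LinearMap.range_codRestrict]
      exact hess.subtype hU hU0 }⟩

theorem GrInjEnvelope.grIso {𝒜 : Γ → AddSubgroup R} {M : Type} [AddCommGroup M] [Module R M]
    {ℳ : Γ → AddSubgroup M} [Decomposition ℳ] (hsm : SMulClosed 𝒜 ℳ)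
    (E₁ E₂ : GrInjEnvelope 𝒜 ℳ) : GrIso (R := R) E₁.grading E₂.grading := by
  obtain ⟨h, hh, hhe⟩ := E₂.injective M E₁.carrier ℳ E₁.grading hsm E₁.smul E₁.emb E₁.emb_hom
    E₁.emb_inj E₂.emb E₂.emb_hom
  have h_inj : Function.Injective h :=
    hh.injective_of_injective_comp E₁.essential (hhe ▸ E₂.emb_inj)
  obtain ⟨π, hπ, hπh⟩ := E₁.injective E₁.carrier E₂.carrier E₁.grading E₂.grading E₁.smul E₂.smul
    h hh h_inj LinearMap.id fun _ _ hx => hx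
  have π_inj : Function.Injective π := hπ.injective_of_injective_comp E₂.essential <| by
    rw [← hhe, ← LinearMap.comp_assoc, hπh, LinearMap.id_comp]
    exact E₁.emb_inj
  have hhπ : h ∘ₗ π = LinearMap.id := LinearMap.ext fun x => π_inj congr($hπh (π x))
  exact ⟨LinearEquiv.ofLinearMap h π hhπ hπh, hh, hπ⟩

/-- every graded module admits a gr-injective envelope, unique up to
graded isomorphism. -/
theorem grInjEnvelope_exists_unique (𝒜 : Γ → AddSubgroup R)
    [DirectSum.Decomposition 𝒜] (hmul : MulClosed 𝒜)
    {M : Type} [AddCommGroup M] [Module R M]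
    (ℳ : Γ → AddSubgroup M) [DirectSum.Decomposition ℳ] (hsm : SMulClosed 𝒜 ℳ) :
    Nonempty (GrInjEnvelope 𝒜 ℳ) ∧
      ∀ E₁ E₂ : GrInjEnvelope 𝒜 ℳ, GrIso (R := R) E₁.grading E₂.grading := by
  refine ⟨?_, GrInjEnvelope.grIso hsm⟩
  let := GradedRing.ofMulClosed 𝒜 hmul
  obtain ⟨Q, _, _, _, e, he⟩ := exists_embedding_into_injective R M
  have hlift : Function.Injective (Coind.lift (𝒜 := 𝒜) hsm e) := by
    rw [← Coind.aug_comp_lift hsm e, LinearMap.coe_comp] at he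
    exact he.of_comp
  exact (Coind.isGrInjective 𝒜 Q).nonempty_grInjEnvelope Coind.smulClosed hlift
    (Coind.isHomogeneousHom_lift hsm e)

end Stmt8

end GradedPaper
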